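/- arXiv:2412.01247 — 13 statements merged into one kernel-verified Lean document; each statement's English description precedes it below -/
import Mathlib

section
/- For every integer M ≥ 2 and all real numbers r, α, β, x, and z with z ≠ 1, the group-averaged defector payoff sum satisfies α·z^{M−1} + ∑_{S=1}^{M} C(M−1, S−1)·[ (r·(S−1)/S)·(x/(1−z)) + β·(M−S)/S ]·(1−z)^{S−1}·z^{M−S} = α·z^{M−1} + (r·x/(1−z))·(1 − (1/M)·∑_{k=0}^{M−1} z^k) + β·∑_{k=1}^{M−1} z^k, where C(n,k) denotes the binomial coefficient. -/
open Finset in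
lemma binom_sum_one (M : ℕ) (hM1 : 1 ≤ M) (z : ℝ) :
    ∑ k ∈ range M, (Nat.choose (M - 1) k : ℝ) * (1 - z) ^ k * z ^ (M - 1 - k) = 1 := by
  have h := add_pow (1 - z) z (M - 1)
  rw [show (1 - z) + z = 1 by ring, one_pow, show M - 1 + 1 = M by omega] at h
  exact (Finset.sum_congr rfl fun k _ => by ring).trans h.symm

open Finset in
lemma binom_sum_inv (M : ℕ) (hM1 : 1 ≤ M) (z : ℝ) (hz : z ≠ 1) :
    ∑ k ∈ range M, (Nat.choose (M - 1) k : ℝ) / ((k : ℝ) + 1) * (1 - z) ^ k * z ^ (M - 1 - k)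
      = (∑ k ∈ range M, z ^ k) / M := by
  have hw : (1 : ℝ) - z ≠ 0 := sub_ne_zero.mpr (Ne.symm hz)
  have hMne : (M : ℝ) ≠ 0 := Nat.cast_ne_zero.mpr (by omega)
  -- multiply both sides by M * (1 - z)
  have key : (M : ℝ) * ((1 - z) *
      ∑ k ∈ range M, (Nat.choose (M - 1) k : ℝ) / ((k : ℝ) + 1) * (1 - z) ^ k * z ^ (M - 1 - k))
      = 1 - z ^ M := by
    rw [Finset.mul_sum, Finset.mul_sum]
    have hterm : ∀ k ∈ range M,
        (M : ℝ) * ((1 - z) * ((Nat.choose (M - 1) k : ℝ) / ((k : ℝ) + 1) * (1 - z) ^ k * z ^ (M - 1 - k)))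
        = (Nat.choose M (k + 1) : ℝ) * (1 - z) ^ (k + 1) * z ^ (M - (k + 1)) := by
      intro k hk
      have hk' : k < M := mem_range.mp hk
      have hnat : M * Nat.choose (M - 1) k = Nat.choose M (k + 1) * (k + 1) := by
        have := Nat.add_one_mul_choose_eq (M - 1) k
        rwa [show M - 1 + 1 = M by omega] at this
      have hcast : (M : ℝ) * (Nat.choose (M - 1) k : ℝ)
          = (Nat.choose M (k + 1) : ℝ) * ((k : ℝ) + 1) := by
        exact_mod_cast congrArg (Nat.cast : ℕ → ℝ) hnat
      have hk1 : ((k : ℝ) + 1) ≠ 0 := by positivity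
      rw [show M - 1 - k = M - (k + 1) by omega]
      field_simp
      linear_combination z ^ (M - (k+1)) * (1-z)^(k+1) * hcast
    rw [sum_congr rfl hterm]
    have h := add_pow (1 - z) z M
    rw [show (1 - z) + z = 1 by ring, one_pow] at h
    rw [Finset.sum_range_succ' (fun j => (1 - z) ^ j * z ^ (M - j) * (Nat.choose M j : ℝ)) M] at h
    simp only [pow_zero, Nat.sub_zero, Nat.choose_zero_right, Nat.cast_one, one_mul, mul_one] at h
    have : ∑ k ∈ range M, (Nat.choose M (k + 1) : ℝ) * (1 - z) ^ (k + 1) * z ^ (M - (k + 1))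
        = ∑ k ∈ range M, (1 - z) ^ (k + 1) * z ^ (M - (k + 1)) * (Nat.choose M (k + 1) : ℝ) :=
      sum_congr rfl fun k _ => by ring
    rw [this]
    linarith [h]
  have hgeom : (1 - z) * ∑ k ∈ range M, z ^ k = 1 - z ^ M := by
    have := geom_sum_mul z M
    linarith [this]
  have h2 : (M : ℝ) * (∑ k ∈ range M, (Nat.choose (M - 1) k : ℝ) / ((k : ℝ) + 1) * (1 - z) ^ k * z ^ (M - 1 - k)) = ∑ k ∈ range M, z ^ k := by
    apply mul_left_cancel₀ hw
    linear_combination key - hgeom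
  rw [eq_div_iff hMne]
  linear_combination h2

open Finset in
/-- The group-averaged defector payoff sum in the optional public
goods game equals its closed form. -/
theorem defector_payoff_sum (M : ℕ) (hM : 2 ≤ M) (r α β x z : ℝ) (hz : z ≠ 1) :
    α * z ^ (M - 1) +
      ∑ S ∈ Finset.Icc 1 M,
        (Nat.choose (M - 1) (S - 1) : ℝ) *
          ((r * ((S : ℝ) - 1) / (S : ℝ)) * (x / (1 - z)) +
            β * ((M : ℝ) - (S : ℝ)) / (S : ℝ)) *
          (1 - z) ^ (S - 1) * z ^ (M - S)
    = α * z ^ (M - 1) +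
        (r * x / (1 - z)) * (1 - (1 / (M : ℝ)) * ∑ k ∈ Finset.range M, z ^ k) +
        β * ∑ k ∈ Finset.Icc 1 (M - 1), z ^ k := by
  have hM1 : 1 ≤ M := by omega
  have hw : (1 : ℝ) - z ≠ 0 := sub_ne_zero.mpr (Ne.symm hz)
  have hMne : (M : ℝ) ≠ 0 := Nat.cast_ne_zero.mpr (by omega)
  -- reindex the LHS sum
  rw [show Finset.Icc 1 M = Finset.Ico 1 (M + 1) by rw [Finset.Ico_add_one_right_eq_Icc],
    Finset.sum_Ico_eq_sum_range]
  rw [show M + 1 - 1 = M from rfl]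
  -- reindex the β sum on the RHS
  have hbeta : ∑ k ∈ Finset.Icc 1 (M - 1), z ^ k = (∑ k ∈ range M, z ^ k) - 1 := by
    rw [show Finset.Icc 1 (M - 1) = Finset.Ico 1 (M - 1 + 1) by rw [Finset.Ico_add_one_right_eq_Icc],
      Finset.sum_Ico_eq_sum_range, show M - 1 + 1 - 1 = M - 1 from rfl]
    have h := Finset.sum_range_succ' (fun k => z ^ k) (M - 1)
    rw [show M - 1 + 1 = M by omega] at h
    rw [sum_congr rfl fun k (_ : k ∈ range (M - 1)) => by rw [add_comm 1 k], h]
    simp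
  rw [hbeta]
  -- express the summand pointwise
  set A := ∑ k ∈ range M, (Nat.choose (M - 1) k : ℝ) * (1 - z) ^ k * z ^ (M - 1 - k) with hA
  set T := ∑ k ∈ range M, (Nat.choose (M - 1) k : ℝ) / ((k : ℝ) + 1) * (1 - z) ^ k * z ^ (M - 1 - k)
    with hT
  have hsummand : ∀ k ∈ range M,
      (Nat.choose (M - 1) (1 + k - 1) : ℝ) *
        ((r * (((1 + k : ℕ) : ℝ) - 1) / ((1 + k : ℕ) : ℝ)) * (x / (1 - z)) +
          β * ((M : ℝ) - ((1 + k : ℕ) : ℝ)) / ((1 + k : ℕ) : ℝ)) *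
        (1 - z) ^ (1 + k - 1) * z ^ (M - (1 + k))
      = (r * x / (1 - z)) *
          ((Nat.choose (M - 1) k : ℝ) * (1 - z) ^ k * z ^ (M - 1 - k)
            - (Nat.choose (M - 1) k : ℝ) / ((k : ℝ) + 1) * (1 - z) ^ k * z ^ (M - 1 - k))
        + β * ((M : ℝ) * ((Nat.choose (M - 1) k : ℝ) / ((k : ℝ) + 1) * (1 - z) ^ k * z ^ (M - 1 - k))
            - (Nat.choose (M - 1) k : ℝ) * (1 - z) ^ k * z ^ (M - 1 - k)) := by
    intro k hk
    have hk1 : ((k : ℝ) + 1) ≠ 0 := by positivity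
    rw [show 1 + k - 1 = k by omega, show M - (1 + k) = M - 1 - k by omega]
    push_cast
    field_simp
    ring
  rw [sum_congr rfl hsummand, Finset.sum_add_distrib, ← Finset.mul_sum, ← Finset.mul_sum,
    Finset.sum_sub_distrib, Finset.sum_sub_distrib, ← Finset.mul_sum]
  rw [← hA, ← hT]
  have hAval : A = 1 := binom_sum_one M hM1 z
  have hTval : T = (∑ k ∈ range M, z ^ k) / M := binom_sum_inv M hM1 z hz
  rw [hAval, hTval]
  field_simp
  ring
end

section
/- For every integer M ≥ 2 and all real numbers r and z, ∑_{S=2}^{M} (1 − r/S)·C(M−1, S−1)·(1−z)^{S−1}·z^{M−S} = 1 + (r−1)·z^{M−1} − (r/M)·∑_{k=0}^{M−1} z^k, where C(n,k) denotes the binomial coefficient. (The right-hand side is the payoff gap function G(z) = Π_D − Π_C of the optional public goods game.) -/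
open Finset

private lemma binom_sum (n : ℕ) (z : ℝ) :
    ∑ j ∈ range n, (n.choose (j+1) : ℝ) * (1 - z)^(j+1) * z^(n-(j+1)) = 1 - z^n := by
  have h := add_pow (1 - z) z n
  rw [sub_add_cancel, one_pow, Finset.sum_range_succ'] at h
  simp only [pow_zero, Nat.sub_zero, Nat.choose_zero_right, Nat.cast_one, one_mul, mul_one] at h
  have hc : ∑ j ∈ range n, (n.choose (j+1) : ℝ) * (1 - z)^(j+1) * z^(n-(j+1))
      = ∑ j ∈ range n, (1 - z)^(j+1) * z^(n-(j+1)) * (n.choose (j+1) : ℝ) := by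
    exact Finset.sum_congr rfl fun j _ => by ring
  rw [hc]; linarith

private lemma key_sum (n : ℕ) (z : ℝ) :
    ∑ j ∈ range n, ((n+1).choose (j+2) : ℝ) * (1 - z)^(j+1) * z^(n-(j+1))
    = (∑ k ∈ range (n+1), z^k) - (n+1) * z^n := by
  induction n with
  | zero => simp
  | succ n ih =>
    have geom : z * ∑ k ∈ range (n+1), z^k
        = (∑ k ∈ range (n+1), z^k) + z^(n+1) - 1 := by
      rw [Finset.mul_sum]
      have h1 : ∑ k ∈ range (n+1), z * z^k = ∑ k ∈ range (n+1), z^(k+1) := by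
        exact Finset.sum_congr rfl fun k _ => by rw [pow_succ, mul_comm]
      rw [h1]
      have h2 := Finset.sum_range_succ' (fun k => z^k) (n+1)
      rw [Finset.sum_range_succ] at h2
      simp only [pow_zero] at h2
      linarith
    have pascal : ∀ j : ℕ, ((n+2).choose (j+2) : ℝ)
        = ((n+1).choose (j+1) : ℝ) + ((n+1).choose (j+2) : ℝ) := by
      intro j
      have := Nat.choose_succ_succ (n+1) (j+1)
      push_cast [this]
      ring
    calc ∑ j ∈ range (n+1), ((n+2).choose (j+2) : ℝ) * (1-z)^(j+1) * z^((n+1)-(j+1))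
        = ∑ j ∈ range (n+1), (((n+1).choose (j+1) : ℝ) * (1-z)^(j+1) * z^((n+1)-(j+1))
            + ((n+1).choose (j+2) : ℝ) * (1-z)^(j+1) * z^((n+1)-(j+1))) := by
          refine Finset.sum_congr rfl fun j _ => ?_
          rw [pascal]; ring
      _ = (1 - z^(n+1)) + ∑ j ∈ range (n+1), ((n+1).choose (j+2) : ℝ) * (1-z)^(j+1) * z^((n+1)-(j+1)) := by
          rw [Finset.sum_add_distrib, binom_sum]
      _ = (1 - z^(n+1)) + z * ∑ j ∈ range n, ((n+1).choose (j+2) : ℝ) * (1-z)^(j+1) * z^(n-(j+1)) := by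
          rw [Finset.sum_range_succ]
          have h0 : ((n+1).choose (n+2) : ℝ) = 0 := by
            rw [Nat.choose_eq_zero_of_lt (by omega)]; norm_num
          rw [h0, Finset.mul_sum]
          have hterm : ∀ j ∈ range n,
              ((n+1).choose (j+2) : ℝ) * (1-z)^(j+1) * z^((n+1)-(j+1))
              = z * (((n+1).choose (j+2) : ℝ) * (1-z)^(j+1) * z^(n-(j+1))) := by
            intro j hj
            rw [Finset.mem_range] at hj
            have hsub : (n+1)-(j+1) = (n-(j+1)) + 1 := by omega
            rw [hsub, pow_succ]; ring
          rw [Finset.sum_congr rfl hterm]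
          ring
      _ = (∑ k ∈ range ((n+1)+1), z^k) - (((n+1):ℕ)+1) * z^(n+1) := by
          rw [ih]
          have hs := Finset.sum_range_succ (fun k => z^k) (n+1)
          have hp : z * z^n = z^(n+1) := by ring
          push_cast
          push_cast at hs
          linear_combination geom - hs - ((n:ℝ)+1) * hp

/-- The averaged payoff gap between defectors and cooperators in the
optional public goods game equals G(z) = 1 + (r-1)z^(M-1) - (r/M)·∑_{k<M} z^k. -/
theorem payoff_gap_sum (M : ℕ) (hM : 2 ≤ M) (r z : ℝ) :
    ∑ S ∈ Finset.Icc 2 M,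
        (1 - r / (S : ℝ)) * (Nat.choose (M - 1) (S - 1) : ℝ) *
          (1 - z) ^ (S - 1) * z ^ (M - S)
    = 1 + (r - 1) * z ^ (M - 1) - (r / (M : ℝ)) * ∑ k ∈ Finset.range M, z ^ k := by
  obtain ⟨n, rfl⟩ : ∃ n, M = n + 1 := ⟨M - 1, by omega⟩
  have hn1 : ((n : ℝ) + 1) ≠ 0 := by positivity
  have hmap : Finset.Icc 2 (n+1) = (Finset.range n).map (addLeftEmbedding 2) := by
    rw [Nat.range_eq_Icc_zero_sub_one n (by omega), Finset.map_add_left_Icc]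
    congr 1
    omega
  rw [hmap, Finset.sum_map]
  simp only [addLeftEmbedding_apply]
  have hterm : ∀ j ∈ range n,
      (1 - r / ((2 + j : ℕ) : ℝ)) * (Nat.choose (n + 1 - 1) (2 + j - 1) : ℝ) *
          (1 - z) ^ (2 + j - 1) * z ^ (n + 1 - (2 + j))
      = (n.choose (j+1) : ℝ) * (1-z)^(j+1) * z^(n-(j+1))
        - (r / ((n:ℝ)+1)) * (((n+1).choose (j+2) : ℝ) * (1-z)^(j+1) * z^(n-(j+1))) := by
    intro j hj
    have e1 : n + 1 - 1 = n := by omega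
    have e2 : 2 + j - 1 = j + 1 := by omega
    have e3 : n + 1 - (2 + j) = n - (j + 1) := by omega
    rw [e1, e2, e3]
    have hc := Nat.add_one_mul_choose_eq n (j+1)
    -- (n+1) * n.choose (j+1) = (n+1).choose (j+2) * (j+2)
    have hcr : ((n:ℝ)+1) * (n.choose (j+1) : ℝ) = ((n+1).choose (j+2) : ℝ) * ((j:ℝ)+2) := by
      exact_mod_cast hc
    have hj2 : ((2 + j : ℕ) : ℝ) ≠ 0 := by positivity
    have hdiv : r / ((2 + j : ℕ) : ℝ) * (n.choose (j+1) : ℝ)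
        = r / ((n:ℝ)+1) * ((n+1).choose (j+2) : ℝ) := by
      rw [div_mul_eq_mul_div, div_mul_eq_mul_div, div_eq_div_iff hj2 hn1]
      push_cast
      linear_combination r * hcr
    have : (1 - r / ((2 + j : ℕ) : ℝ)) * (n.choose (j+1) : ℝ)
        = (n.choose (j+1) : ℝ) - r / ((n:ℝ)+1) * ((n+1).choose (j+2) : ℝ) := by
      rw [sub_mul, one_mul, hdiv]
    linear_combination ((1-z)^(j+1) * z^(n-(j+1))) * this
  rw [Finset.sum_congr rfl hterm, Finset.sum_sub_distrib, binom_sum, ← Finset.mul_sum, key_sum]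
  have e4 : n + 1 - 1 = n := by omega
  rw [e4]
  push_cast
  field_simp
  ring
end

section
/- For every integer M ≥ 2, all real numbers r, α, β, and every real x with 0 < x < 1, one has x·(1−x)·(Π_C(x, 1−x) − α) = −((1−x)^M + x − 1)·(x·(r−1−α−β) + β), where Π_C is the average cooperator payoff of the optional public goods game. -/
/-- G(z) := 1 + (r-1)·z^(M-1) - (r/M)·∑_{k=0}^{M-1} z^k, the payoff gap Π_D - Π_C. -/
noncomputable def G (M : ℕ) (r z : ℝ) : ℝ :=
  1 + (r - 1) * z ^ (M - 1) - (r / (M : ℝ)) * ∑ k ∈ Finset.range M, z ^ k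

/-- Average defector payoff Π_D(x,z) of the optional public goods game. -/
noncomputable def PiD (M : ℕ) (r α β x z : ℝ) : ℝ :=
  α * z ^ (M - 1) + (r * x / (1 - z)) * (1 - (1 / (M : ℝ)) * ∑ k ∈ Finset.range M, z ^ k)
    + β * ∑ k ∈ Finset.Icc 1 (M - 1), z ^ k

/-- Average cooperator payoff Π_C(x,z) = Π_D(x,z) - G(z). -/
noncomputable def PiC (M : ℕ) (r α β x z : ℝ) : ℝ :=
  PiD M r α β x z - G M r z

/-- On the cooperator–non-participant edge (z = 1 - x), the replicator
field x(1-x)(Π_C - α) factorizes as -((1-x)^M + x - 1)·(x(r-1-α-β) + β). -/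
theorem CN_edge_factorization (M : ℕ) (hM : 2 ≤ M) (r α β : ℝ)
    (x : ℝ) (hx0 : 0 < x) (hx1 : x < 1) :
    x * (1 - x) * (PiC M r α β x (1 - x) - α)
      = -((1 - x) ^ M + x - 1) * (x * (r - 1 - α - β) + β) := by
  have hM1 : 1 ≤ M := le_trans one_le_two hM
  have hxne : x ≠ 0 := ne_of_gt hx0
  have hMne : (M : ℝ) ≠ 0 := Nat.cast_ne_zero.mpr (by omega)
  set S : ℝ := ∑ k ∈ Finset.range M, (1 - x) ^ k with hSdef
  have hS : x * S = 1 - (1 - x) ^ M := by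
    have := geom_sum_mul (1 - x) M
    nlinarith [this]
  have hP : (1 - x) ^ (M - 1) * (1 - x) = (1 - x) ^ M := by
    rw [← pow_succ]; congr 1; omega
  have hzne : (1 : ℝ) - x ≠ 0 := by linarith
  have hIcc : ∑ k ∈ Finset.Icc 1 (M - 1), (1 - x) ^ k = S - 1 := by
    have h1 : Finset.Icc 1 (M - 1) = Finset.Ico 1 M := by
      rw [← Finset.Ico_add_one_right_eq_Icc]; congr 1; omega
    have h3 : S = ∑ k ∈ Finset.Ico 0 M, (1 - x) ^ k := by
      rw [hSdef, Finset.range_eq_Ico]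
    rw [← Finset.sum_Ico_consecutive _ (Nat.zero_le 1) hM1] at h3
    simp at h3
    rw [h1]; linarith
  have hSval : S = (1 - (1 - x) ^ M) / x := by
    field_simp; linarith [hS]
  have hPval : (1 - x) ^ (M - 1) = (1 - x) ^ M / (1 - x) := by
    field_simp; linarith [hP]
  simp only [PiC, PiD, G, ← hSdef, hIcc, hSval, hPval]
  have h1x : 1 - (1 - x) = x := by ring
  rw [h1x]
  field_simp
  ring
end

section
/- Let M ≥ 2 be an integer and r, α, β real numbers with β > 0 and r > 1 + α. Then for every real x with 0 < x < 1, the C–N edge field satisfies F_CN(x) = −((1−x)^M + x − 1)·(x·(r−1−α−β) + β) > 0; hence on the cooperator–non-participant edge the replicator flow always points toward full cooperation. -/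
/-- If β > 0 and r > 1 + α, then the C–N edge field
F_CN(x) = -((1-x)^M + x - 1)·(x(r-1-α-β) + β) is positive on (0,1):
the flow points toward full cooperation. -/
theorem CN_edge_cooperation_stable (M : ℕ) (hM : 2 ≤ M) (r α β : ℝ)
    (hβ : 0 < β) (hr : 1 + α < r) :
    ∀ x : ℝ, 0 < x → x < 1 →
      0 < -((1 - x) ^ M + x - 1) * (x * (r - 1 - α - β) + β) := by
  intro x hx0 hx1
  have h1 : (0:ℝ) < 1 - x := by linarith
  have h2 : (1 - x) ^ M < 1 - x := by
    calc (1 - x) ^ M < (1 - x) ^ 1 :=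
          pow_lt_pow_right_of_lt_one₀ h1 (by linarith) (by omega)
      _ = 1 - x := pow_one _
  have hA : 0 < -((1 - x) ^ M + x - 1) := by linarith
  have hB : 0 < x * (r - 1 - α - β) + β := by nlinarith
  positivity
end

section
/- Let M ≥ 2 be an integer and r, α, β real numbers with β < 0 and r > 1 + α. Then x* := β/(1 − r + α + β) lies in (0,1), and the C–N edge field F_CN(x) = −((1−x)^M + x − 1)·(x·(r−1−α−β) + β) satisfies F_CN(x) < 0 for 0 < x < x* and F_CN(x) > 0 for x* < x < 1; hence the cooperator–non-participant edge is bistable, with full cooperation and full non-participation both attracting and an unstable interior rest point at x*. -/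
/-- If β < 0 and r > 1 + α, then x* = β/(1-r+α+β) ∈ (0,1) and the
C–N edge field F_CN(x) = -((1-x)^M + x - 1)·(x(r-1-α-β) + β) is negative on
(0, x*) and positive on (x*, 1): the C–N edge is bistable with an unstable
interior rest point at x*. -/
theorem CN_edge_bistable (M : ℕ) (hM : 2 ≤ M) (r α β : ℝ)
    (hβ : β < 0) (hr : 1 + α < r) :
    β / (1 - r + α + β) ∈ Set.Ioo (0 : ℝ) 1 ∧
      (∀ x : ℝ, 0 < x → x < β / (1 - r + α + β) →
        -((1 - x) ^ M + x - 1) * (x * (r - 1 - α - β) + β) < 0) ∧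
      (∀ x : ℝ, β / (1 - r + α + β) < x → x < 1 →
        0 < -((1 - x) ^ M + x - 1) * (x * (r - 1 - α - β) + β)) := by
  set d : ℝ := 1 - r + α + β with hd
  have hdneg : d < 0 := by simp [hd]; linarith
  have hx0 : 0 < β / d := div_pos_of_neg_of_neg hβ hdneg
  have hx1 : β / d < 1 := by
    rw [div_lt_one_of_neg hdneg]; linarith
  have hP : ∀ x : ℝ, 0 < x → x < 1 → 0 < -((1 - x) ^ M + x - 1) := by
    intro x h0 h1
    have ha0 : 0 < 1 - x := by linarith
    have ha1 : 1 - x < 1 := by linarith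
    have := pow_lt_pow_right_of_lt_one₀ ha0 ha1 (by omega : 1 < M)
    simp at this
    linarith [this]
  refine ⟨⟨hx0, hx1⟩, ?_, ?_⟩
  · intro x h0 hxs
    have hx1' : x < 1 := lt_trans hxs hx1
    have hL : x * (r - 1 - α - β) + β < 0 := by
      have := (lt_div_iff_of_neg hdneg).mp hxs
      have hs : r - 1 - α - β = -d := by simp [hd]; ring
      rw [hs]; nlinarith
    exact mul_neg_of_pos_of_neg (hP x h0 hx1') hL
  · intro x hxs h1
    have h0 : 0 < x := lt_trans hx0 hxs
    have hL : 0 < x * (r - 1 - α - β) + β := by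
      have := (div_lt_iff_of_neg hdneg).mp hxs
      have hs : r - 1 - α - β = -d := by simp [hd]; ring
      rw [hs]; nlinarith
    exact mul_pos (hP x h0 h1) hL
end

section
/- Let M ≥ 2 be an integer and α, β real numbers with α > 0 and β > 0. Then y* := β/(α+β) lies in (0,1), and the D–N edge field F_DN(y) = ((1−y)^M + y − 1)·(y·(α+β) − β) satisfies F_DN(y) > 0 for 0 < y < y* and F_DN(y) < 0 for y* < y < 1; hence on the defector–non-participant edge the mixed state with defector fraction y* is the unique interior rest point and attracts all of (0,1). -/
/-- If α > 0 and β > 0, then y* = β/(α+β) ∈ (0,1) and the D–N edge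
field F_DN(y) = ((1-y)^M + y - 1)·(y(α+β) - β) is positive on (0, y*) and
negative on (y*, 1): the mixed state y* attracts all of (0,1). -/
theorem DN_edge_mixed_stable (M : ℕ) (hM : 2 ≤ M) (α β : ℝ)
    (hα : 0 < α) (hβ : 0 < β) :
    β / (α + β) ∈ Set.Ioo (0 : ℝ) 1 ∧
      (∀ y : ℝ, 0 < y → y < β / (α + β) →
        0 < ((1 - y) ^ M + y - 1) * (y * (α + β) - β)) ∧
      (∀ y : ℝ, β / (α + β) < y → y < 1 →
        ((1 - y) ^ M + y - 1) * (y * (α + β) - β) < 0) := by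
  have hab : 0 < α + β := by linarith
  have hstar0 : 0 < β / (α + β) := div_pos hβ hab
  have hstar1 : β / (α + β) < 1 := (div_lt_one hab).2 (by linarith)
  have key : ∀ y : ℝ, 0 < y → y < 1 → (1 - y) ^ M + y - 1 < 0 := by
    intro y hy hy1
    have hx0 : 0 < 1 - y := by linarith
    have hx1 : 1 - y < 1 := by linarith
    have h2 : (1 - y) ^ M ≤ (1 - y) ^ 2 :=
      pow_le_pow_of_le_one hx0.le hx1.le hM
    nlinarith
  refine ⟨⟨hstar0, hstar1⟩, ?_, ?_⟩
  · intro y hy hylt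
    have hy1 : y < 1 := hylt.trans hstar1
    have h1 := key y hy hy1
    have h2 : y * (α + β) - β < 0 := by
      nlinarith [(lt_div_iff₀ hab).mp hylt]
    exact mul_pos_of_neg_of_neg h1 h2
  · intro y hgt hy1
    have hy : 0 < y := hstar0.trans hgt
    have h1 := key y hy hy1
    have h2 : 0 < y * (α + β) - β := by
      nlinarith [(div_lt_iff₀ hab).mp hgt]
    exact mul_neg_of_neg_of_pos h1 h2
end

section
/- Let M ≥ 2 be an integer and α, β real numbers with α > 0 and β < 0. Then for every real y with 0 < y < 1 the D–N edge field satisfies F_DN(y) = ((1−y)^M + y − 1)·(y·(α+β) − β) < 0; hence on the defector–non-participant edge the replicator flow always points toward full non-participation. -/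
/-- If α > 0 and β < 0, then the D–N edge field
F_DN(y) = ((1-y)^M + y - 1)·(y(α+β) - β) is negative on (0,1): the flow points
toward full non-participation. -/
theorem DN_edge_nonparticipation_stable (M : ℕ) (hM : 2 ≤ M) (α β : ℝ)
    (hα : 0 < α) (hβ : β < 0) :
    ∀ y : ℝ, 0 < y → y < 1 →
      ((1 - y) ^ M + y - 1) * (y * (α + β) - β) < 0 := by
  intro y hy0 hy1
  have h1 : (1 - y) ^ M < 1 - y := by
    calc (1-y)^M < (1-y)^1 := pow_lt_pow_right_of_lt_one₀ (by linarith) (by linarith) (by omega)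
    _ = 1 - y := pow_one _
  have h2 : 0 < y * (α + β) - β := by nlinarith
  nlinarith
end

section
/- Let M ≥ 2 be an integer and α, β real numbers with α < 0 and β < 0. Then y* := β/(α+β) lies in (0,1), and the D–N edge field F_DN(y) = ((1−y)^M + y − 1)·(y·(α+β) − β) satisfies F_DN(y) < 0 for 0 < y < y* and F_DN(y) > 0 for y* < y < 1; hence the defector–non-participant edge is bistable, with full defection and full non-participation both attracting and an unstable interior rest point at y*. -/
/-- If α < 0 and β < 0, then y* = β/(α+β) ∈ (0,1) and the D–N edge
field F_DN(y) = ((1-y)^M + y - 1)·(y(α+β) - β) is negative on (0, y*) and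
positive on (y*, 1): the D–N edge is bistable with an unstable interior rest
point at y*. -/
theorem DN_edge_bistable (M : ℕ) (hM : 2 ≤ M) (α β : ℝ)
    (hα : α < 0) (hβ : β < 0) :
    β / (α + β) ∈ Set.Ioo (0 : ℝ) 1 ∧
      (∀ y : ℝ, 0 < y → y < β / (α + β) →
        ((1 - y) ^ M + y - 1) * (y * (α + β) - β) < 0) ∧
      (∀ y : ℝ, β / (α + β) < y → y < 1 →
        0 < ((1 - y) ^ M + y - 1) * (y * (α + β) - β)) := by
  have hs : α + β < 0 := by linarith
  have hy0 : 0 < β / (α + β) := div_pos_of_neg_of_neg hβ hs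
  have hy1 : β / (α + β) < 1 := by
    rw [div_lt_one_of_neg hs]; linarith
  have hfac : ∀ y : ℝ, 0 < y → y < 1 → (1 - y) ^ M + y - 1 < 0 := by
    intro y h0 h1
    have hb0 : 0 < 1 - y := by linarith
    have hb1 : 1 - y < 1 := by linarith
    have : (1 - y) ^ M < (1 - y) ^ 1 :=
      pow_lt_pow_right_of_lt_one₀ hb0 hb1 (by omega)
    simpa using by nlinarith [this]
  refine ⟨⟨hy0, hy1⟩, ?_, ?_⟩
  · intro y h0 hlt
    have hy1' : y < 1 := lt_trans hlt hy1
    have hg : 0 < y * (α + β) - β := by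
      have := (lt_div_iff_of_neg hs).mp hlt
      nlinarith
    exact mul_neg_of_neg_of_pos (hfac y h0 hy1') hg
  · intro y hlt h1
    have h0 : 0 < y := lt_trans hy0 hlt
    have hg : y * (α + β) - β < 0 := by
      have := (div_lt_iff_of_neg hs).mp hlt
      nlinarith
    exact mul_pos_of_neg_of_neg (hfac y h0 h1) hg
end

section
/- Let M ≥ 2 be an integer, r and α real numbers, and suppose β = 0. For all real x ≥ 0 and z with 0 ≤ z < 1 and x + z ≤ 1, setting y := 1 − x − z and Π̄ := x·Π_C(x,z) + y·Π_D(x,z) + z·α (the population mean payoff), one has α − Π̄ = (1 − z^{M−1})·(α·(1−z) − (r−1)·x). In particular the non-participant replicator equation factorizes as z' = z(α − Π̄) = z·(1−z)·(1−z^{M−1})·(α − (r−1)·x/(1−z)). -/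
/-- In the loner model (β = 0), with y = 1-x-z and population mean
payoff Π̄ = x·Π_C + y·Π_D + z·α, one has
α - Π̄ = (1 - z^(M-1))·(α(1-z) - (r-1)x), so the non-participant replicator
equation factorizes as z' = z(α - Π̄) = z(1-z)(1-z^(M-1))·(α - (r-1)x/(1-z)). -/
theorem loner_mean_payoff_factorization (M : ℕ) (hM : 2 ≤ M) (r α β : ℝ)
    (hβ : β = 0) (x z : ℝ) (hx : 0 ≤ x) (hz0 : 0 ≤ z) (hz1 : z < 1)
    (hxz : x + z ≤ 1) :
    α - (x * PiC M r α β x z + (1 - x - z) * PiD M r α β x z + z * α)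
        = (1 - z ^ (M - 1)) * (α * (1 - z) - (r - 1) * x) ∧
      z * (α - (x * PiC M r α β x z + (1 - x - z) * PiD M r α β x z + z * α))
        = z * (1 - z) * (1 - z ^ (M - 1)) * (α - (r - 1) * x / (1 - z)) := by
  have hz : (1 : ℝ) - z ≠ 0 := by linarith
  have hMne : (M : ℝ) ≠ 0 := by positivity
  have h1 : α - (x * PiC M r α β x z + (1 - x - z) * PiD M r α β x z + z * α)
      = (1 - z ^ (M - 1)) * (α * (1 - z) - (r - 1) * x) := by
    simp only [PiC, PiD, G, hβ]
    field_simp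
    ring
  refine ⟨h1, ?_⟩
  rw [h1]
  field_simp
end

section
/- Let M ≥ 2 be an integer and r, α real numbers. Define u(z) := −G(z)/(z·(1−z)·(1−z^{M−1})) for z ∈ (0,1) and w(f) := (α − (r−1)·f)/(f·(1−f)) for f ∈ (0,1), and let W(f) := α·log f + (r−1−α)·log(1−f). Suppose f, z : ℝ → (0,1) are differentiable and satisfy f'(t) = u(z(t)) and z'(t) = w(f(t)) for all t, and let U : (0,1) → ℝ be any differentiable function with U' = u. Then the function t ↦ W(f(t)) − U(z(t)) is constant; i.e., the rescaled loner-model dynamics admit a conserved Hamiltonian-type quantity. -/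
/-- Rescaled loner-model field u(z) = -G(z)/(z(1-z)(1-z^(M-1))). -/
noncomputable def u (M : ℕ) (r z : ℝ) : ℝ :=
  -G M r z / (z * (1 - z) * (1 - z ^ (M - 1)))

/-- Rescaled loner-model field w(f) = (α - (r-1)f)/(f(1-f)). -/
noncomputable def w (r α f : ℝ) : ℝ :=
  (α - (r - 1) * f) / (f * (1 - f))

/-- Hamiltonian potential W(f) = α·log f + (r-1-α)·log(1-f). -/
noncomputable def W (r α f : ℝ) : ℝ :=
  α * Real.log f + (r - 1 - α) * Real.log (1 - f)

lemma W_hasDerivAt (r α x : ℝ) (hx : x ∈ Set.Ioo (0:ℝ) 1) :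
    HasDerivAt (W r α) (w r α x) x := by
  obtain ⟨h0, h1⟩ := hx
  have h1' : 1 - x ≠ 0 := by linarith
  have hd : HasDerivAt (W r α) (α * x⁻¹ + (r - 1 - α) * ((1 - x)⁻¹ * (0 - 1))) x := by
    unfold W
    exact ((Real.hasDerivAt_log h0.ne').const_mul α).add
      (((Real.hasDerivAt_log h1').comp x ((hasDerivAt_const x (1:ℝ)).sub (hasDerivAt_id x))).const_mul (r - 1 - α))
  convert hd using 1
  unfold w
  field_simp
  ring

/-- Along solutions of the rescaled loner-model dynamics
f' = u(z), z' = w(f) with f, z valued in (0,1), and for any antiderivative U of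
u on (0,1), the quantity W(f(t)) - U(z(t)) is conserved. -/
theorem loner_conserved_quantity (M : ℕ) (hM : 2 ≤ M) (r α : ℝ)
    (f z : ℝ → ℝ) (hf : ∀ t : ℝ, f t ∈ Set.Ioo (0 : ℝ) 1)
    (hz : ∀ t : ℝ, z t ∈ Set.Ioo (0 : ℝ) 1)
    (hfd : ∀ t : ℝ, HasDerivAt f (u M r (z t)) t)
    (hzd : ∀ t : ℝ, HasDerivAt z (w r α (f t)) t)
    (U : ℝ → ℝ) (hU : ∀ s ∈ Set.Ioo (0 : ℝ) 1, HasDerivAt U (u M r s) s) :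
    ∀ t₁ t₂ : ℝ, W r α (f t₁) - U (z t₁) = W r α (f t₂) - U (z t₂) := by
  intro t₁ t₂
  have key : ∀ t : ℝ, HasDerivAt (fun s => W r α (f s) - U (z s)) 0 t := by
    intro t
    have h1 : HasDerivAt (fun s => W r α (f s)) (w r α (f t) * u M r (z t)) t :=
      (W_hasDerivAt r α (f t) (hf t)).comp t (hfd t)
    have h2 : HasDerivAt (fun s => U (z s)) (u M r (z t) * w r α (f t)) t :=
      (hU (z t) (hz t)).comp t (hzd t)
    have := h1.sub h2
    rw [show (0:ℝ) = w r α (f t) * u M r (z t) - u M r (z t) * w r α (f t) by ring]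
    exact this
  have : (fun s => W r α (f s) - U (z s)) t₁ = (fun s => W r α (f s) - U (z s)) t₂ :=
    is_const_of_deriv_eq_zero (fun t => (key t).differentiableAt)
      (fun t => (key t).deriv) t₁ t₂
  simpa using this
end

section
/- Let M ≥ 3 be an integer and r a real number with 2 < r < M, and let α be a real number with 0 < α < r − 1. Then f* := α/(r−1) lies in (0,1), and there exists z* ∈ (0,1) with G(z*) = 0; consequently (f*, z*) is an interior rest point of the rescaled loner-model dynamics f' = u(z), z' = w(f), where u(z) = −G(z)/(z(1−z)(1−z^{M−1})) and w(f) = (α − (r−1)f)/(f(1−f)). -/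
/-- For M ≥ 3, 2 < r < M and 0 < α < r-1, the point
f* = α/(r-1) lies in (0,1), and there is z* ∈ (0,1) with G(z*) = 0; hence
(f*, z*) is an interior rest point of the rescaled loner-model dynamics
f' = u(z), z' = w(f). -/
theorem loner_interior_rest_point (M : ℕ) (hM : 3 ≤ M) (r : ℝ)
    (hr2 : 2 < r) (hrM : r < (M : ℝ)) (α : ℝ) (hα0 : 0 < α) (hα1 : α < r - 1) :
    α / (r - 1) ∈ Set.Ioo (0 : ℝ) 1 ∧
      ∃ zs ∈ Set.Ioo (0 : ℝ) 1,
        G M r zs = 0 ∧ u M r zs = 0 ∧ w r α (α / (r - 1)) = 0 := by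
  have hM3 : (3:ℝ) ≤ (M:ℝ) := by exact_mod_cast hM
  have hM0 : (0:ℝ) < (M:ℝ) := by linarith
  have hr1 : (0:ℝ) < r - 1 := by linarith
  refine ⟨⟨div_pos hα0 hr1, (div_lt_one hr1).2 hα1⟩, ?_⟩
  -- G 0 > 0
  have hG0 : 0 < G M r 0 := by
    have : ∑ k ∈ Finset.range M, (0:ℝ) ^ k = 1 := by
      rw [Finset.sum_eq_single 0]
      · simp
      · intro k _ hk; exact zero_pow hk
      · intro h; exact absurd (Finset.mem_range.2 (by omega)) h
    unfold G
    rw [this]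
    have : (0:ℝ) ^ (M - 1) = 0 := zero_pow (by omega)
    rw [this]
    have : r / M < 1 := (div_lt_one hM0).2 hrM
    linarith
  -- G 1 = 0
  have hG1 : G M r 1 = 0 := by
    unfold G
    simp [Finset.sum_const, mul_comm]
    field_simp
    ring
  -- derivative of G at 1
  have hsum : HasDerivAt (fun z : ℝ => ∑ k ∈ Finset.range M, z ^ k)
      (∑ k ∈ Finset.range M, (k:ℝ) * 1 ^ (k - 1)) 1 :=
    HasDerivAt.fun_sum fun k _ => hasDerivAt_pow k 1
  have hpow : HasDerivAt (fun z : ℝ => z ^ (M - 1)) (((M-1:ℕ):ℝ) * 1 ^ (M - 1 - 1)) 1 :=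
    hasDerivAt_pow (M - 1) 1
  have hG' : HasDerivAt (G M r)
      ((r - 1) * (((M-1:ℕ):ℝ) * 1 ^ (M - 1 - 1)) -
        (r / M) * ∑ k ∈ Finset.range M, (k:ℝ) * 1 ^ (k - 1)) 1 := by
    unfold G
    have := ((hasDerivAt_const (1:ℝ) (1:ℝ)).fun_add (hpow.const_mul (r-1))).fun_sub
      (hsum.const_mul (r / M))
    simpa using this
  have hsumval : ∑ k ∈ Finset.range M, (k:ℝ) * 1 ^ (k - 1) = (M:ℝ) * ((M:ℝ) - 1) / 2 := by
    have h2 : (∑ i ∈ Finset.range M, i) * 2 = M * (M - 1) := Finset.sum_range_id_mul_two M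
    have : ((∑ i ∈ Finset.range M, i : ℕ) : ℝ) * 2 = (M:ℝ) * ((M:ℝ) - 1) := by
      have := congrArg (fun n : ℕ => (n : ℝ)) h2
      push_cast [Nat.cast_sub (by omega : 1 ≤ M)] at this
      convert this using 2 <;> push_cast <;> ring
    simp only [one_pow, mul_one]
    push_cast at this ⊢
    linarith [this]
  have hD : 0 < (r - 1) * (((M-1:ℕ):ℝ) * 1 ^ (M - 1 - 1)) -
      (r / M) * ∑ k ∈ Finset.range M, (k:ℝ) * 1 ^ (k - 1) := by
    rw [hsumval]
    have hcast : ((M-1:ℕ):ℝ) = (M:ℝ) - 1 := by push_cast [Nat.cast_sub (by omega : 1 ≤ M)]; ring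
    rw [hcast]
    have hdiv : (r / M) * ((M:ℝ) * ((M:ℝ) - 1) / 2) = r * ((M:ℝ) - 1) / 2 := by
      field_simp
    rw [hdiv]
    simp only [one_pow, mul_one]
    nlinarith
  -- get z₀ ∈ (0,1) with G z₀ < 0
  have hslope : Filter.Tendsto (slope (G M r) 1) (nhdsWithin 1 {(1:ℝ)}ᶜ)
      (nhds _) := hasDerivAt_iff_tendsto_slope.1 hG'
  have hev : ∀ᶠ z in nhdsWithin 1 {(1:ℝ)}ᶜ, 0 < slope (G M r) 1 z :=
    hslope.eventually (eventually_gt_nhds hD)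
  have hev2 : ∀ᶠ z in nhdsWithin (1:ℝ) (Set.Iio 1), 0 < slope (G M r) 1 z :=
    hev.filter_mono (nhdsWithin_mono 1 (fun x hx => ne_of_lt hx))
  have hmem : Set.Ioo (0:ℝ) 1 ∈ nhdsWithin (1:ℝ) (Set.Iio 1) :=
    Ioo_mem_nhdsLT_of_mem (by constructor <;> norm_num)
  obtain ⟨z₀, hz₀s, hz₀m⟩ := (hev2.and (Filter.eventually_of_mem hmem fun x hx => hx)).exists
  have hz₀neg : G M r z₀ < 0 := by
    have hs : 0 < (G M r z₀ - G M r 1) / (z₀ - 1) := by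
      simpa [slope_def_field, div_eq_div_iff] using hz₀s
    rw [hG1, sub_zero] at hs
    rcases div_pos_iff.1 hs with ⟨h1, h2⟩ | ⟨h1, h2⟩
    · linarith [hz₀m.2]
    · exact h1
  -- IVT
  have hcont : ContinuousOn (G M r) (Set.Icc 0 z₀) := by
    apply Continuous.continuousOn
    unfold G
    continuity
  have hivt := intermediate_value_Ioo' (le_of_lt hz₀m.1) hcont
  have h0mem : (0:ℝ) ∈ Set.Ioo (G M r z₀) (G M r 0) := ⟨hz₀neg, hG0⟩
  obtain ⟨zs, hzs, hGzs⟩ := hivt h0mem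
  refine ⟨zs, ⟨hzs.1, lt_trans hzs.2 hz₀m.2⟩, hGzs, ?_, ?_⟩
  · unfold u; rw [hGzs]; simp
  · unfold w
    rw [mul_div_cancel₀ α (ne_of_gt hr1)]
    simp
end

section
/- Let M ≥ 2 be an integer and α, β real numbers with α > 0 and β > 0, and set y* := β/(α+β). If y : [0,∞) → ℝ is differentiable, satisfies y'(t) = ((1−y(t))^M + y(t) − 1)·(y(t)·(α+β) − β) for all t ≥ 0, and y(0) ∈ (0,1), then y(t) ∈ (0,1) for all t ≥ 0, y is monotone (strictly increasing if y(0) < y*, strictly decreasing if y(0) > y*, constant if y(0) = y*), and y(t) → y* as t → ∞. -/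
open Filter
open Set


noncomputable def DNF (M : ℕ) (α β : ℝ) : ℝ → ℝ :=
  fun u => ((1 - u) ^ M + u - 1) * (u * (α + β) - β)

lemma DNF_hasDerivAt (M : ℕ) (α β : ℝ) (u : ℝ) :
    HasDerivAt (DNF M α β)
      (((M : ℝ) * (1 - u) ^ (M - 1) * (-1) + 1) * (u * (α + β) - β)
        + ((1 - u) ^ M + u - 1) * (α + β)) u := by
  have h1 : HasDerivAt (fun u : ℝ => 1 - u) (-1) u := by
    simpa using (hasDerivAt_id u).const_sub 1
  have h3 : HasDerivAt (fun u : ℝ => (1 - u) ^ M + u - 1)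
      ((M : ℝ) * (1 - u) ^ (M - 1) * (-1) + 1) u := by
    simpa using ((h1.pow M).add (hasDerivAt_id u)).sub_const 1
  have h4 : HasDerivAt (fun u : ℝ => u * (α + β) - β) (α + β) u := by
    simpa using ((hasDerivAt_id u).mul_const (α + β)).sub_const β
  exact h3.mul h4

lemma DNF_continuous (M : ℕ) (α β : ℝ) : Continuous (DNF M α β) := by
  unfold DNF; fun_prop

lemma DNF_lip (M : ℕ) (α β : ℝ) (hα : 0 < α) (hβ : 0 < β) :
    ∃ K : NNReal, LipschitzOnWith K (DNF M α β) (Set.Icc (0:ℝ) 1) := by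
  have hab : 0 < α + β := by linarith
  refine ⟨(((M : ℝ) + 2) * (α + β)).toNNReal,
    Convex.lipschitzOnWith_of_nnnorm_hasDerivWithin_le (convex_Icc 0 1)
      (fun x _ => (DNF_hasDerivAt M α β x).hasDerivWithinAt) ?_⟩
  intro x hx
  have hb : ‖((M : ℝ) * (1 - x) ^ (M - 1) * (-1) + 1) * (x * (α + β) - β)
      + ((1 - x) ^ M + x - 1) * (α + β)‖ ≤ ((M : ℝ) + 2) * (α + β) := by
    rw [Real.norm_eq_abs]
    have ha0 : (0:ℝ) ≤ 1 - x := by linarith [hx.2]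
    have ha1 : (1:ℝ) - x ≤ 1 := by linarith [hx.1]
    have hp1 : (0:ℝ) ≤ (1 - x) ^ (M - 1) := pow_nonneg ha0 _
    have hp1' : (1 - x) ^ (M - 1) ≤ 1 := pow_le_one₀ ha0 ha1
    have hp2 : (0:ℝ) ≤ (1 - x) ^ M := pow_nonneg ha0 _
    have hp2' : (1 - x) ^ M ≤ 1 := pow_le_one₀ ha0 ha1
    have hM0 : (0:ℝ) ≤ M := Nat.cast_nonneg M
    have e1 : |(M : ℝ) * (1 - x) ^ (M - 1) * (-1) + 1| ≤ (M : ℝ) + 1 := by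
      rw [abs_le]
      constructor <;> nlinarith
    have e2 : |x * (α + β) - β| ≤ α + β := by
      rw [abs_le]
      constructor <;> nlinarith [hx.1, hx.2]
    have e3 : |(1 - x) ^ M + x - 1| ≤ 1 := by
      rw [abs_le]
      constructor <;> nlinarith [hx.1, hx.2]
    calc |((M : ℝ) * (1 - x) ^ (M - 1) * (-1) + 1) * (x * (α + β) - β)
          + ((1 - x) ^ M + x - 1) * (α + β)|
        ≤ |((M : ℝ) * (1 - x) ^ (M - 1) * (-1) + 1)| * |x * (α + β) - β|
          + |(1 - x) ^ M + x - 1| * |α + β| := by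
          refine (abs_add_le _ _).trans ?_
          rw [abs_mul, abs_mul]
      _ ≤ ((M : ℝ) + 1) * (α + β) + 1 * (α + β) := by
          have hc : |α + β| = α + β := abs_of_pos hab
          rw [hc]
          exact add_le_add (mul_le_mul e1 e2 (abs_nonneg _) (by positivity))
            (mul_le_mul_of_nonneg_right e3 hab.le)
      _ = ((M : ℝ) + 2) * (α + β) := by ring
  rw [← norm_toNNReal]
  exact Real.toNNReal_mono hb

lemma DNF_neg_factor (M : ℕ) (hM : 2 ≤ M) {u : ℝ} (hu : u ∈ Set.Ioo (0:ℝ) 1) :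
    (1 - u) ^ M + u - 1 < 0 := by
  have h0 : (0:ℝ) < 1 - u := by linarith [hu.2]
  have h2 : (1 - u) ^ M ≤ (1 - u) ^ 2 := by
    apply pow_le_pow_of_le_one h0.le (by linarith [hu.1]) hM
  nlinarith [mul_pos hu.1 h0]

lemma DNF_pos (M : ℕ) (hM : 2 ≤ M) (α β : ℝ) (hα : 0 < α) (hβ : 0 < β)
    {u : ℝ} (hu : u ∈ Set.Ioo (0:ℝ) 1) (hlt : u < β / (α + β)) :
    0 < DNF M α β u := by
  have hab : (0:ℝ) < α + β := by linarith
  have h2 : u * (α + β) - β < 0 := by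
    have := (lt_div_iff₀ hab).mp hlt
    linarith
  exact mul_pos_of_neg_of_neg (DNF_neg_factor M hM hu) h2

lemma DNF_neg (M : ℕ) (hM : 2 ≤ M) (α β : ℝ) (hα : 0 < α) (hβ : 0 < β)
    {u : ℝ} (hu : u ∈ Set.Ioo (0:ℝ) 1) (hlt : β / (α + β) < u) :
    DNF M α β u < 0 := by
  have hab : (0:ℝ) < α + β := by linarith
  have h2 : 0 < u * (α + β) - β := by
    have := (div_lt_iff₀ hab).mp hlt
    linarith
  exact mul_neg_of_neg_of_pos (DNF_neg_factor M hM hu) h2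

lemma DNF_zero (M : ℕ) (α β : ℝ) : DNF M α β 0 = 0 := by simp [DNF]

lemma DNF_one (M : ℕ) (hM : 2 ≤ M) (α β : ℝ) : DNF M α β 1 = 0 := by
  simp [DNF, zero_pow (by omega : M ≠ 0)]

lemma DNF_star (M : ℕ) (α β : ℝ) (hα : 0 < α) (hβ : 0 < β) :
    DNF M α β (β / (α + β)) = 0 := by
  have hab : α + β ≠ 0 := by positivity
  simp [DNF, div_mul_cancel₀ _ hab]

lemma DN_no_touch_back (M : ℕ) (hM : 2 ≤ M) (α β : ℝ) (hα : 0 < α) (hβ : 0 < β)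
    (y : ℝ → ℝ)
    (hode : ∀ t : ℝ, 0 ≤ t → HasDerivAt y (DNF M α β (y t)) t)
    (c : ℝ) (hc : DNF M α β c = 0) (hc' : c ∈ Set.Icc (0:ℝ) 1) (t₀ : ℝ) (ht₀ : 0 ≤ t₀)
    (hmem : ∀ s ∈ Set.Icc (0:ℝ) t₀, y s ∈ Set.Icc (0:ℝ) 1)
    (hend : y t₀ = c) : y 0 = c := by
  obtain ⟨K, hK⟩ := DNF_lip M α β hα hβ
  have hcont : ContinuousOn y (Icc 0 t₀) := fun t ht =>
    (hode t ht.1).continuousAt.continuousWithinAt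
  have heq := ODE_solution_unique_of_mem_Icc_left (v := fun _ u => DNF M α β u)
    (s := fun _ => Set.Icc (0:ℝ) 1) (K := K) (f := y) (g := fun _ => c) (a := 0) (b := t₀)
    (fun _ _ => hK) hcont
    (fun t ht => (hode t ht.1.le).hasDerivWithinAt)
    (fun t ht => hmem t ⟨ht.1.le, ht.2⟩)
    continuousOn_const
    (fun t ht => by simpa [hc] using (hasDerivWithinAt_const t (Set.Iic t) c))
    (fun t ht => hc')
    hend
  exact heq ⟨le_rfl, ht₀⟩

lemma DN_const_forward (M : ℕ) (hM : 2 ≤ M) (α β : ℝ) (hα : 0 < α) (hβ : 0 < β)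
    (y : ℝ → ℝ)
    (hode : ∀ t : ℝ, 0 ≤ t → HasDerivAt y (DNF M α β (y t)) t)
    (c : ℝ) (hc : DNF M α β c = 0) (hc' : c ∈ Set.Icc (0:ℝ) 1)
    (hmem : ∀ s : ℝ, 0 ≤ s → y s ∈ Set.Icc (0:ℝ) 1)
    (h0 : y 0 = c) : ∀ t : ℝ, 0 ≤ t → y t = c := by
  intro T hT
  obtain ⟨K, hK⟩ := DNF_lip M α β hα hβ
  have hcont : ContinuousOn y (Icc 0 T) := fun t ht =>
    (hode t ht.1).continuousAt.continuousWithinAt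
  have heq := ODE_solution_unique_of_mem_Icc_right (v := fun _ u => DNF M α β u)
    (s := fun _ => Set.Icc (0:ℝ) 1) (K := K) (f := y) (g := fun _ => c) (a := 0) (b := T)
    (fun _ _ => hK) hcont
    (fun t ht => (hode t ht.1).hasDerivWithinAt)
    (fun t ht => hmem t ht.1)
    continuousOn_const
    (fun t ht => by simpa [hc] using (hasDerivWithinAt_const t (Set.Ici t) c))
    (fun t ht => hc')
    h0
  exact heq ⟨hT, le_rfl⟩

lemma DN_invariant (M : ℕ) (hM : 2 ≤ M) (α β : ℝ) (hα : 0 < α) (hβ : 0 < β)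
    (y : ℝ → ℝ)
    (hode : ∀ t : ℝ, 0 ≤ t → HasDerivAt y (DNF M α β (y t)) t)
    (hy0 : y 0 ∈ Set.Ioo (0:ℝ) 1) :
    ∀ t : ℝ, 0 ≤ t → y t ∈ Set.Ioo (0:ℝ) 1 := by
  intro T hT
  by_contra hT'
  set S := Set.Icc (0:ℝ) T ∩ y ⁻¹' (Set.Ioo (0:ℝ) 1)ᶜ with hSdef
  have hconT : ContinuousOn y (Icc 0 T) := fun t ht =>
    (hode t ht.1).continuousAt.continuousWithinAt
  have hSclosed : IsClosed S :=
    hconT.preimage_isClosed_of_isClosed isClosed_Icc isOpen_Ioo.isClosed_compl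
  have hSne : S.Nonempty := ⟨T, ⟨hT, le_rfl⟩, hT'⟩
  have hSbdd : BddBelow S := ⟨0, fun t ht => ht.1.1⟩
  set t₀ := sInf S with ht₀def
  have ht₀S : t₀ ∈ S := hSclosed.csInf_mem hSne hSbdd
  have ht₀0 : 0 ≤ t₀ := ht₀S.1.1
  have ht₀pos : 0 < t₀ := by
    rcases eq_or_lt_of_le ht₀0 with h | h
    · have h2 := ht₀S.2
      rw [← h] at h2
      exact absurd hy0 h2
    · exact h
  have hbefore : ∀ s ∈ Set.Ico (0:ℝ) t₀, y s ∈ Set.Ioo (0:ℝ) 1 := by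
    intro s hs
    by_contra hns
    exact absurd (csInf_le hSbdd ⟨⟨hs.1, hs.2.le.trans ht₀S.1.2⟩, hns⟩) (not_le.mpr hs.2)
  have ht₀Icc : y t₀ ∈ Set.Icc (0:ℝ) 1 := by
    have hcw : ContinuousWithinAt y (Set.Ico 0 t₀) t₀ :=
      (hode t₀ ht₀0).continuousAt.continuousWithinAt
    have hclos : t₀ ∈ closure (Set.Ico (0:ℝ) t₀) := by
      rw [closure_Ico (ne_of_lt ht₀pos)]
      exact ⟨ht₀0, le_rfl⟩
    have hmem := hcw.mem_closure_image hclos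
    refine isClosed_Icc.closure_subset (closure_mono ?_ hmem)
    rintro _ ⟨s, hs, rfl⟩
    exact Set.Ioo_subset_Icc_self (hbefore s hs)
  have hmem : ∀ s ∈ Set.Icc (0:ℝ) t₀, y s ∈ Set.Icc (0:ℝ) 1 := by
    intro s hs
    rcases eq_or_lt_of_le hs.2 with h | h
    · rw [h]; exact ht₀Icc
    · exact Set.Ioo_subset_Icc_self (hbefore s ⟨hs.1, h⟩)
  have hval : y t₀ = 0 ∨ y t₀ = 1 := by
    have h2 := ht₀S.2
    simp only [Set.mem_preimage, Set.mem_compl_iff, Set.mem_Ioo, not_and_or, not_lt] at h2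
    rcases h2 with h | h
    · left; exact le_antisymm h ht₀Icc.1
    · right; exact le_antisymm ht₀Icc.2 h
  rcases hval with h | h
  · have := DN_no_touch_back M hM α β hα hβ y hode 0 (DNF_zero M α β)
      ⟨le_rfl, zero_le_one⟩ t₀ ht₀0 hmem h
    exact absurd this (ne_of_gt hy0.1)
  · have := DN_no_touch_back M hM α β hα hβ y hode 1 (DNF_one M hM α β)
      ⟨zero_le_one, le_rfl⟩ t₀ ht₀0 hmem h
    exact absurd this (ne_of_lt hy0.2)

lemma DN_no_cross_lt (M : ℕ) (hM : 2 ≤ M) (α β : ℝ) (hα : 0 < α) (hβ : 0 < β)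
    (y : ℝ → ℝ)
    (hode : ∀ t : ℝ, 0 ≤ t → HasDerivAt y (DNF M α β (y t)) t)
    (hy0 : y 0 ∈ Set.Ioo (0:ℝ) 1)
    (hlt : y 0 < β / (α + β)) :
    ∀ t : ℝ, 0 ≤ t → y t < β / (α + β) := by
  intro T hT
  by_contra hT'
  push_neg at hT'
  set q := β / (α + β) with hq
  have hinv := DN_invariant M hM α β hα hβ y hode hy0
  set S := Set.Icc (0:ℝ) T ∩ y ⁻¹' (Set.Ici q) with hSdef
  have hconT : ContinuousOn y (Icc 0 T) := fun t ht =>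
    (hode t ht.1).continuousAt.continuousWithinAt
  have hSclosed : IsClosed S := hconT.preimage_isClosed_of_isClosed isClosed_Icc isClosed_Ici
  have hSne : S.Nonempty := ⟨T, ⟨hT, le_rfl⟩, hT'⟩
  have hSbdd : BddBelow S := ⟨0, fun t ht => ht.1.1⟩
  set t₀ := sInf S with ht₀def
  have ht₀S : t₀ ∈ S := hSclosed.csInf_mem hSne hSbdd
  have ht₀0 : 0 ≤ t₀ := ht₀S.1.1
  have ht₀pos : 0 < t₀ := by
    rcases eq_or_lt_of_le ht₀0 with h | h
    · have h2 := ht₀S.2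
      rw [← h] at h2
      exact absurd h2 (not_le.mpr hlt)
    · exact h
  have hbefore : ∀ s ∈ Set.Ico (0:ℝ) t₀, y s < q := by
    intro s hs
    by_contra hns
    push_neg at hns
    exact absurd (csInf_le hSbdd ⟨⟨hs.1, hs.2.le.trans ht₀S.1.2⟩, hns⟩) (not_le.mpr hs.2)
  have ht₀le : y t₀ ≤ q := by
    have hcw : ContinuousWithinAt y (Set.Ico 0 t₀) t₀ :=
      (hode t₀ ht₀0).continuousAt.continuousWithinAt
    have hclos : t₀ ∈ closure (Set.Ico (0:ℝ) t₀) := by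
      rw [closure_Ico (ne_of_lt ht₀pos)]
      exact ⟨ht₀0, le_rfl⟩
    have hmem := hcw.mem_closure_image hclos
    have hsub : y '' Set.Ico 0 t₀ ⊆ Set.Iic q := by
      rintro _ ⟨s, hs, rfl⟩
      exact (hbefore s hs).le
    exact (isClosed_Iic.closure_subset (closure_mono hsub hmem))
  have ht₀eq : y t₀ = q := le_antisymm ht₀le ht₀S.2
  have hmem : ∀ s ∈ Set.Icc (0:ℝ) t₀, y s ∈ Set.Icc (0:ℝ) 1 :=
    fun s hs => Set.Ioo_subset_Icc_self (hinv s hs.1)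
  have := DN_no_touch_back M hM α β hα hβ y hode q (DNF_star M α β hα hβ)
    (Set.Ioo_subset_Icc_self ⟨div_pos hβ (by linarith), by
      rw [div_lt_one (by linarith)]; linarith⟩) t₀ ht₀0 hmem ht₀eq
  exact absurd this (ne_of_lt hlt)

lemma DN_no_cross_gt (M : ℕ) (hM : 2 ≤ M) (α β : ℝ) (hα : 0 < α) (hβ : 0 < β)
    (y : ℝ → ℝ)
    (hode : ∀ t : ℝ, 0 ≤ t → HasDerivAt y (DNF M α β (y t)) t)
    (hy0 : y 0 ∈ Set.Ioo (0:ℝ) 1)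
    (hgt : β / (α + β) < y 0) :
    ∀ t : ℝ, 0 ≤ t → β / (α + β) < y t := by
  intro T hT
  by_contra hT'
  push_neg at hT'
  set q := β / (α + β) with hq
  have hinv := DN_invariant M hM α β hα hβ y hode hy0
  set S := Set.Icc (0:ℝ) T ∩ y ⁻¹' (Set.Iic q) with hSdef
  have hconT : ContinuousOn y (Icc 0 T) := fun t ht =>
    (hode t ht.1).continuousAt.continuousWithinAt
  have hSclosed : IsClosed S := hconT.preimage_isClosed_of_isClosed isClosed_Icc isClosed_Iic
  have hSne : S.Nonempty := ⟨T, ⟨hT, le_rfl⟩, hT'⟩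
  have hSbdd : BddBelow S := ⟨0, fun t ht => ht.1.1⟩
  set t₀ := sInf S with ht₀def
  have ht₀S : t₀ ∈ S := hSclosed.csInf_mem hSne hSbdd
  have ht₀0 : 0 ≤ t₀ := ht₀S.1.1
  have ht₀pos : 0 < t₀ := by
    rcases eq_or_lt_of_le ht₀0 with h | h
    · have h2 := ht₀S.2
      rw [← h] at h2
      exact absurd h2 (not_le.mpr hgt)
    · exact h
  have hbefore : ∀ s ∈ Set.Ico (0:ℝ) t₀, q < y s := by
    intro s hs
    by_contra hns
    push_neg at hns
    exact absurd (csInf_le hSbdd ⟨⟨hs.1, hs.2.le.trans ht₀S.1.2⟩, hns⟩) (not_le.mpr hs.2)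
  have ht₀ge : q ≤ y t₀ := by
    have hcw : ContinuousWithinAt y (Set.Ico 0 t₀) t₀ :=
      (hode t₀ ht₀0).continuousAt.continuousWithinAt
    have hclos : t₀ ∈ closure (Set.Ico (0:ℝ) t₀) := by
      rw [closure_Ico (ne_of_lt ht₀pos)]
      exact ⟨ht₀0, le_rfl⟩
    have hmem := hcw.mem_closure_image hclos
    have hsub : y '' Set.Ico 0 t₀ ⊆ Set.Ici q := by
      rintro _ ⟨s, hs, rfl⟩
      exact (hbefore s hs).le
    exact (isClosed_Ici.closure_subset (closure_mono hsub hmem))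
  have ht₀eq : y t₀ = q := le_antisymm ht₀S.2 ht₀ge
  have hmem : ∀ s ∈ Set.Icc (0:ℝ) t₀, y s ∈ Set.Icc (0:ℝ) 1 :=
    fun s hs => Set.Ioo_subset_Icc_self (hinv s hs.1)
  have := DN_no_touch_back M hM α β hα hβ y hode q (DNF_star M α β hα hβ)
    (Set.Ioo_subset_Icc_self ⟨div_pos hβ (by linarith), by
      rw [div_lt_one (by linarith)]; linarith⟩) t₀ ht₀0 hmem ht₀eq
  exact absurd this (ne_of_gt hgt)

/-- On the defector–non-participant edge with α, β > 0, the
replicator dynamics y' = ((1-y)^M + y - 1)(y(α+β) - β) starting in (0,1) stay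
in (0,1), are monotone (increasing if y(0) < y*, decreasing if y(0) > y*,
constant if y(0) = y*, where y* = β/(α+β)), and converge to y*. -/
theorem DN_edge_convergence (M : ℕ) (hM : 2 ≤ M) (α β : ℝ)
    (hα : 0 < α) (hβ : 0 < β) (y : ℝ → ℝ)
    (hode : ∀ t : ℝ, 0 ≤ t →
      HasDerivAt y (((1 - y t) ^ M + y t - 1) * (y t * (α + β) - β)) t)
    (hy0 : y 0 ∈ Set.Ioo (0 : ℝ) 1) :
    (∀ t : ℝ, 0 ≤ t → y t ∈ Set.Ioo (0 : ℝ) 1) ∧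
      (y 0 < β / (α + β) → StrictMonoOn y (Set.Ici (0 : ℝ))) ∧
      (β / (α + β) < y 0 → StrictAntiOn y (Set.Ici (0 : ℝ))) ∧
      (y 0 = β / (α + β) → ∀ t : ℝ, 0 ≤ t → y t = β / (α + β)) ∧
      Tendsto y atTop (nhds (β / (α + β))) := by
  have hab : (0:ℝ) < α + β := by linarith
  set q : ℝ := β / (α + β) with hqdef
  have hq0 : 0 < q := div_pos hβ hab
  have hq1 : q < 1 := by rw [hqdef, div_lt_one hab]; linarith
  have hode' : ∀ t : ℝ, 0 ≤ t → HasDerivAt y (DNF M α β (y t)) t := fun t ht => hode t ht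
  have hinv := DN_invariant M hM α β hα hβ y hode' hy0
  have hcontIci : ContinuousOn y (Set.Ici (0:ℝ)) := fun t ht =>
    (hode' t ht).continuousAt.continuousWithinAt
  -- strict monotonicity
  have hmonoOf : y 0 < q → StrictMonoOn y (Set.Ici (0:ℝ)) := by
    intro hlt
    have hbelow := DN_no_cross_lt M hM α β hα hβ y hode' hy0 hlt
    apply strictMonoOn_of_deriv_pos (convex_Ici 0) hcontIci
    intro x hx
    rw [interior_Ici] at hx
    rw [(hode' x (le_of_lt hx)).deriv]
    exact DNF_pos M hM α β hα hβ (hinv x (le_of_lt hx)) (hbelow x (le_of_lt hx))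
  have hantiOf : q < y 0 → StrictAntiOn y (Set.Ici (0:ℝ)) := by
    intro hgt
    have habove := DN_no_cross_gt M hM α β hα hβ y hode' hy0 hgt
    apply strictAntiOn_of_deriv_neg (convex_Ici 0) hcontIci
    intro x hx
    rw [interior_Ici] at hx
    rw [(hode' x (le_of_lt hx)).deriv]
    exact DNF_neg M hM α β hα hβ (hinv x (le_of_lt hx)) (habove x (le_of_lt hx))
  have hconstOf : y 0 = q → ∀ t : ℝ, 0 ≤ t → y t = q := fun h0 =>
    DN_const_forward M hM α β hα hβ y hode' q (DNF_star M α β hα hβ)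
      (Set.Ioo_subset_Icc_self ⟨hq0, hq1⟩)
      (fun s hs => Set.Ioo_subset_Icc_self (hinv s hs)) h0
  refine ⟨hinv, hmonoOf, hantiOf, hconstOf, ?_⟩
  rcases lt_trichotomy (y 0) q with hlt | heq | hgt
  · -- increasing case
    have hsm := hmonoOf hlt
    have hbelow := DN_no_cross_lt M hM α β hα hβ y hode' hy0 hlt
    set z : ℝ → ℝ := fun t => y (max t 0) with hzdef
    have hzy : ∀ t : ℝ, 0 ≤ t → z t = y t := fun t ht => by
      simp [hzdef, max_eq_left ht]
    have hzmono : Monotone z := fun s t hst =>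
      hsm.monotoneOn (le_max_right s 0) (le_max_right t 0) (max_le_max hst le_rfl)
    have hbdd : BddAbove (Set.range z) := by
      refine ⟨q, ?_⟩
      rintro x ⟨t, rfl⟩
      exact (hbelow _ (le_max_right t 0)).le
    have hten := tendsto_atTop_ciSup hzmono hbdd
    set L := ⨆ t, z t with hLdef
    have hL1 : ∀ t : ℝ, 0 ≤ t → y t ≤ L := fun t ht => by
      rw [← hzy t ht]; exact le_ciSup hbdd t
    have hy0L : y 0 ≤ L := hL1 0 le_rfl
    have hLle : L ≤ q := ciSup_le fun t => (hbelow _ (le_max_right t 0)).le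
    have hLeq : L = q := by
      by_contra hne
      have hLlt : L < q := lt_of_le_of_ne hLle hne
      obtain ⟨u₀, hu₀mem, hu₀min⟩ := (isCompact_Icc (a := y 0) (b := L)).exists_isMinOn
        ⟨y 0, le_rfl, hy0L⟩ (DNF_continuous M α β).continuousOn
      set c := DNF M α β u₀ with hcdef
      have hu₀Ioo : u₀ ∈ Set.Ioo (0:ℝ) 1 :=
        ⟨lt_of_lt_of_le hy0.1 hu₀mem.1, by nlinarith [hu₀mem.2]⟩
      have hcpos : 0 < c := DNF_pos M hM α β hα hβ hu₀Ioo (lt_of_le_of_lt hu₀mem.2 hLlt)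
      have hder : ∀ t : ℝ, 0 ≤ t → c ≤ DNF M α β (y t) := fun t ht =>
        isMinOn_iff.mp hu₀min (y t) ⟨hsm.monotoneOn Set.self_mem_Ici ht ht, hL1 t ht⟩
      have hmono2 : MonotoneOn (fun s => y s - c * s) (Set.Ici (0:ℝ)) := by
        apply monotoneOn_of_deriv_nonneg (convex_Ici 0)
        · exact hcontIci.sub (continuous_const.mul continuous_id).continuousOn
        · intro x hx
          rw [interior_Ici] at hx
          exact ((hode' x (le_of_lt hx)).sub
            (by simpa using (hasDerivAt_id x).const_mul c)).differentiableAt.differentiableWithinAt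
        · intro x hx
          rw [interior_Ici] at hx
          have hd : HasDerivAt (fun s => y s - c * s) (DNF M α β (y x) - c) x :=
            (hode' x (le_of_lt hx)).sub (by simpa using (hasDerivAt_id x).const_mul c)
          rw [hd.deriv]
          linarith [hder x (le_of_lt hx)]
      set T := (L + 1 - y 0) / c with hTdef
      have hT0 : 0 ≤ T := div_nonneg (by linarith) hcpos.le
      have hgrow : y 0 - c * 0 ≤ y T - c * T := hmono2 Set.self_mem_Ici hT0 hT0
      have hcT : c * T = L + 1 - y 0 := by
        rw [hTdef, mul_comm, div_mul_cancel₀ _ (ne_of_gt hcpos)]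
      have := hL1 T hT0
      linarith
    rw [hLeq] at hten
    exact hten.congr' (by
      filter_upwards [eventually_ge_atTop (0:ℝ)] with t ht using hzy t ht)
  · -- constant case
    have hc := hconstOf heq
    apply Tendsto.congr' _ (tendsto_const_nhds (x := q))
    filter_upwards [eventually_ge_atTop (0:ℝ)] with t ht
    exact (hc t ht).symm
  · -- decreasing case
    have hsa := hantiOf hgt
    have habove := DN_no_cross_gt M hM α β hα hβ y hode' hy0 hgt
    set z : ℝ → ℝ := fun t => y (max t 0) with hzdef
    have hzy : ∀ t : ℝ, 0 ≤ t → z t = y t := fun t ht => by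
      simp [hzdef, max_eq_left ht]
    have hzanti : Antitone z := fun s t hst =>
      hsa.antitoneOn (le_max_right s 0) (le_max_right t 0) (max_le_max hst le_rfl)
    have hbdd : BddBelow (Set.range z) := by
      refine ⟨q, ?_⟩
      rintro x ⟨t, rfl⟩
      exact (habove _ (le_max_right t 0)).le
    have hten := tendsto_atTop_ciInf hzanti hbdd
    set L := ⨅ t, z t with hLdef
    have hL1 : ∀ t : ℝ, 0 ≤ t → L ≤ y t := fun t ht => by
      rw [← hzy t ht]; exact ciInf_le hbdd t
    have hy0L : L ≤ y 0 := hL1 0 le_rfl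
    have hLge : q ≤ L := le_ciInf fun t => (habove _ (le_max_right t 0)).le
    have hLeq : L = q := by
      by_contra hne
      have hLgt : q < L := lt_of_le_of_ne hLge (Ne.symm hne)
      obtain ⟨u₀, hu₀mem, hu₀max⟩ := (isCompact_Icc (a := L) (b := y 0)).exists_isMaxOn
        ⟨y 0, hy0L, le_rfl⟩ (DNF_continuous M α β).continuousOn
      set c := DNF M α β u₀ with hcdef
      have hu₀Ioo : u₀ ∈ Set.Ioo (0:ℝ) 1 :=
        ⟨by nlinarith [hu₀mem.1], lt_of_le_of_lt hu₀mem.2 hy0.2⟩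
      have hcneg : c < 0 := DNF_neg M hM α β hα hβ hu₀Ioo (lt_of_lt_of_le hLgt hu₀mem.1)
      have hder : ∀ t : ℝ, 0 ≤ t → DNF M α β (y t) ≤ c := fun t ht =>
        isMaxOn_iff.mp hu₀max (y t) ⟨hL1 t ht, hsa.antitoneOn Set.self_mem_Ici ht ht⟩
      have hanti2 : AntitoneOn (fun s => y s - c * s) (Set.Ici (0:ℝ)) := by
        apply antitoneOn_of_deriv_nonpos (convex_Ici 0)
        · exact hcontIci.sub (continuous_const.mul continuous_id).continuousOn
        · intro x hx
          rw [interior_Ici] at hx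
          exact ((hode' x (le_of_lt hx)).sub
            (by simpa using (hasDerivAt_id x).const_mul c)).differentiableAt.differentiableWithinAt
        · intro x hx
          rw [interior_Ici] at hx
          have hd : HasDerivAt (fun s => y s - c * s) (DNF M α β (y x) - c) x :=
            (hode' x (le_of_lt hx)).sub (by simpa using (hasDerivAt_id x).const_mul c)
          rw [hd.deriv]
          linarith [hder x (le_of_lt hx)]
      set T := (L - 1 - y 0) / c with hTdef
      have hT0 : 0 ≤ T := div_nonneg_of_nonpos (by linarith : L - 1 - y 0 ≤ 0) hcneg.le
      have hgrow : y T - c * T ≤ y 0 - c * 0 := hanti2 Set.self_mem_Ici hT0 hT0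
      have hcT : c * T = L - 1 - y 0 := by
        rw [hTdef, mul_comm, div_mul_cancel₀ _ (ne_of_lt hcneg)]
      have := hL1 T hT0
      linarith
    rw [hLeq] at hten
    exact hten.congr' (by
      filter_upwards [eventually_ge_atTop (0:ℝ)] with t ht using hzy t ht)
end

section
/- Let M ≥ 2 be an integer and r, α, β real numbers with β > 0 and r > 1 + α. If x : [0,∞) → ℝ is differentiable, satisfies x'(t) = −((1−x(t))^M + x(t) − 1)·(x(t)·(r−1−α−β) + β) for all t ≥ 0, and x(0) ∈ (0,1), then x(t) ∈ (0,1) for all t ≥ 0, x is strictly increasing, and x(t) → 1 as t → ∞; i.e., cooperation fully invades non-participation on the cooperator–non-participant edge. -/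
open Filter

lemma prod3_le_aux {a b p A B P : ℝ} (ha : 0 ≤ a) (hb : 0 ≤ b) (hp : 0 ≤ p)
    (hA : a ≤ A) (hB : b ≤ B) (hP : p ≤ P) : a * b * p ≤ A * B * P := by
  have h1 : a * b ≤ A * B := mul_le_mul hA hB hb (ha.trans hA)
  exact mul_le_mul h1 hP hp (mul_nonneg (ha.trans hA) (hb.trans hB))

set_option maxHeartbeats 1000000

/-- On the cooperator–non-participant edge with β > 0 and
r > 1 + α, the replicator dynamics
x' = -((1-x)^M + x - 1)(x(r-1-α-β) + β) starting in (0,1) stay in (0,1), are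
strictly increasing, and converge to 1: cooperation fully invades
non-participation. -/
theorem CN_edge_cooperation_invades (M : ℕ) (hM : 2 ≤ M) (r α β : ℝ)
    (hβ : 0 < β) (hr : 1 + α < r) (x : ℝ → ℝ)
    (hode : ∀ t : ℝ, 0 ≤ t →
      HasDerivAt x (-((1 - x t) ^ M + x t - 1) * (x t * (r - 1 - α - β) + β)) t)
    (hx0 : x 0 ∈ Set.Ioo (0 : ℝ) 1) :
    (∀ t : ℝ, 0 ≤ t → x t ∈ Set.Ioo (0 : ℝ) 1) ∧
      StrictMonoOn x (Set.Ici (0 : ℝ)) ∧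
      Tendsto x atTop (nhds 1) := by
  obtain ⟨N, rfl⟩ : ∃ N, M = N + 2 := ⟨M - 2, by omega⟩
  obtain ⟨hx0pos, hx0lt⟩ := hx0
  set c : ℝ := r - 1 - α - β with hc
  set F : ℝ → ℝ := fun v => -((1 - v) ^ (N + 2) + v - 1) * (v * c + β) with hF
  have hode' : ∀ t : ℝ, 0 ≤ t → HasDerivAt x (F (x t)) t := hode
  clear hode
  set K : ℝ := (N + 2 : ℝ) * (|c| + β) with hK
  have hBpos : 0 < |c| + β := by positivity
  -- factorization of F
  have hFfac : ∀ v : ℝ, F v = (1 - v) * (1 - (1 - v) ^ (N + 1)) * (v * c + β) := by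
    intro v; rw [hF]; ring
  -- second factor rewriting
  have hvc : ∀ v : ℝ, v * c + β = v * (r - 1 - α) + (1 - v) * β := by
    intro v; rw [hc]; ring
  -- bounds on F over [0,1]
  have hbound : ∀ v ∈ Set.Icc (0:ℝ) 1, |F v| ≤ K * v ∧ |F v| ≤ K * (1 - v) := by
    intro v ⟨hv0, hv1⟩
    have hu0 : (0:ℝ) ≤ 1 - v := by linarith
    have hu1 : 1 - v ≤ 1 := by linarith
    have hpow0 : (0:ℝ) ≤ (1 - v) ^ (N + 1) := pow_nonneg hu0 _
    have hpow1 : (1 - v) ^ (N + 1) ≤ 1 := pow_le_one₀ hu0 hu1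
    -- Bernoulli: (1-v)^(N+1) ≥ 1 + (N+1)(-v)
    have hbern : 1 + (N + 1 : ℝ) * (-v) ≤ (1 - v) ^ (N + 1) := by
      have := one_add_mul_le_pow (a := -v) (by linarith) (N + 1)
      calc 1 + (N + 1 : ℝ) * (-v) = 1 + ((N + 1 : ℕ) : ℝ) * (-v) := by push_cast; ring
        _ ≤ (1 + -v) ^ (N + 1) := this
        _ = (1 - v) ^ (N + 1) := by ring
    have habs1 : |v * c + β| ≤ |c| + β := by
      calc |v * c + β| ≤ |v * c| + |β| := abs_add_le _ _
        _ = |v| * |c| + β := by rw [abs_mul, abs_of_pos hβ]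
        _ ≤ 1 * |c| + β := by
            have : |v| ≤ 1 := abs_le.2 ⟨by linarith, hv1⟩
            nlinarith [abs_nonneg c]
        _ = |c| + β := by ring
    have hfacbd : |(1 - v) * (1 - (1 - v) ^ (N + 1))| ≤ (N + 2 : ℝ) * v := by
      rw [abs_of_nonneg (by nlinarith)]
      nlinarith
    have hfacbd2 : |(1 - v) * (1 - (1 - v) ^ (N + 1))| ≤ 1 - v := by
      rw [abs_of_nonneg (by nlinarith)]
      nlinarith
    constructor
    · calc |F v| = |(1 - v) * (1 - (1 - v) ^ (N + 1))| * |v * c + β| := by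
            rw [hFfac, abs_mul]
        _ ≤ ((N + 2 : ℝ) * v) * (|c| + β) :=
            mul_le_mul hfacbd habs1 (abs_nonneg _) (by positivity)
        _ = K * v := by rw [hK]; ring
    · calc |F v| = |(1 - v) * (1 - (1 - v) ^ (N + 1))| * |v * c + β| := by
            rw [hFfac, abs_mul]
        _ ≤ (1 - v) * (|c| + β) :=
            mul_le_mul hfacbd2 habs1 (abs_nonneg _) hu0
        _ ≤ K * (1 - v) := by
            rw [hK]
            have hNn : (0:ℝ) ≤ (N:ℝ) := Nat.cast_nonneg N
            nlinarith [mul_nonneg (mul_nonneg hNn hBpos.le) hu0,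
              mul_nonneg hBpos.le hu0]
  have hcontAt : ∀ t : ℝ, 0 ≤ t → ContinuousAt x t := fun t ht =>
    (hode' t ht).continuousAt
  -- Invariance
  have hInv : ∀ t : ℝ, 0 ≤ t → x t ∈ Set.Ioo (0:ℝ) 1 := by
    by_contra hcon
    push_neg at hcon
    obtain ⟨t0, ht0, ht0x⟩ := hcon
    set A : Set ℝ := {t | 0 ≤ t ∧ x t ∉ Set.Ioo (0:ℝ) 1} with hA
    have hAne : A.Nonempty := ⟨t0, ht0, ht0x⟩
    have hAbdd : BddBelow A := ⟨0, fun s hs => hs.1⟩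
    have hAclosed : IsClosed A := by
      apply IsSeqClosed.isClosed
      intro u p hu hup
      have hp0 : 0 ≤ p := le_of_tendsto_of_tendsto' tendsto_const_nhds hup
        (fun n => (hu n).1)
      have hxp : Tendsto (fun n => x (u n)) atTop (nhds (x p)) :=
        ((hcontAt p hp0).tendsto).comp hup
      refine ⟨hp0, ?_⟩
      have hclosed : IsClosed ((Set.Ioo (0:ℝ) 1)ᶜ) := isOpen_Ioo.isClosed_compl
      exact hclosed.mem_of_tendsto hxp (Eventually.of_forall fun n => (hu n).2)
    set T : ℝ := sInf A with hT
    have hTA : T ∈ A := hAclosed.csInf_mem hAne hAbdd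
    have hT0 : 0 ≤ T := hTA.1
    have hTpos : 0 < T := by
      rcases hT0.lt_or_eq with h | h
      · exact h
      · exfalso; exact hTA.2 (by rw [← h]; exact ⟨hx0pos, hx0lt⟩)
    have hbefore : ∀ s : ℝ, 0 ≤ s → s < T → x s ∈ Set.Ioo (0:ℝ) 1 := by
      intro s hs hsT
      by_contra hns
      exact absurd (csInf_le hAbdd ⟨hs, hns⟩) (not_le.2 hsT)
    have hIccT : ∀ s ∈ Set.Icc (0:ℝ) T, x s ∈ Set.Icc (0:ℝ) 1 := by
      intro s ⟨hs0, hsT⟩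
      rcases hsT.lt_or_eq with h | h
      · exact Set.Ioo_subset_Icc_self (hbefore s hs0 h)
      · rw [h]
        have hlim : Tendsto x (nhdsWithin T (Set.Iio T)) (nhds (x T)) :=
          (hcontAt T hT0).continuousWithinAt
        have hev : ∀ᶠ u in nhdsWithin T (Set.Iio T), x u ∈ Set.Icc (0:ℝ) 1 := by
          have h1 : ∀ᶠ u in nhdsWithin T (Set.Iio T), u ∈ Set.Iio T :=
            eventually_mem_nhdsWithin
          have h2 : ∀ᶠ u in nhdsWithin T (Set.Iio T), (0:ℝ) < u :=
            eventually_nhdsWithin_of_eventually_nhds (eventually_gt_nhds hTpos)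
          filter_upwards [h1, h2] with u hu1 hu2
          exact Set.Ioo_subset_Icc_self (hbefore u hu2.le hu1)
        exact isClosed_Icc.mem_of_tendsto hlim hev
    have hxT : x T = 0 ∨ x T = 1 := by
      have h1 := hIccT T ⟨hT0, le_rfl⟩
      have h2 := hTA.2
      simp only [Set.mem_Ioo, not_and, not_lt] at h2
      rcases lt_or_ge 0 (x T) with h | h
      · right; linarith [h2 h, h1.2]
      · left; linarith [h1.1]
    -- Gronwall in reversed time
    have hgron : ∀ z z' : ℝ → ℝ, (∀ t ∈ Set.Icc (0:ℝ) T, HasDerivAt z (z' t) t) →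
        ‖z 0‖ ≤ 0 → (∀ t ∈ Set.Ico (0:ℝ) T, |z' t| ≤ K * ‖z t‖) →
        ‖z T‖ ≤ 0 := by
      intro z z' hz hz0 hzb
      have := norm_le_gronwallBound_of_norm_deriv_right_le
        (f := z) (f' := z') (a := 0) (b := T) (δ := 0) (K := K) (ε := 0)
        (fun t ht => (hz t ht).continuousAt.continuousWithinAt)
        (fun t ht => (hz t (Set.Ico_subset_Icc_self ht)).hasDerivWithinAt)
        hz0
        (fun t ht => by simpa using hzb t ht)
        T ⟨hT0, le_rfl⟩
      simpa [gronwallBound_ε0_δ0] using this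
    have hderivTt : ∀ t ∈ Set.Icc (0:ℝ) T,
        HasDerivAt (fun t => x (T - t)) (F (x (T - t)) * (-1)) t := by
      intro t ⟨ht0, htT⟩
      have h1 : HasDerivAt (fun t : ℝ => T - t) (-1) t := by
        simpa using (hasDerivAt_id t).const_sub T
      exact (hode' (T - t) (by linarith)).comp t h1
    have hmemTt : ∀ t ∈ Set.Ico (0:ℝ) T, x (T - t) ∈ Set.Icc (0:ℝ) 1 := by
      intro t ⟨ht0, htT⟩
      exact hIccT (T - t) ⟨by linarith, by linarith⟩
    rcases hxT with h0 | h1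
    · -- x T = 0 : use z t = x (T - t)
      have key := hgron (fun t => x (T - t)) (fun t => F (x (T - t)) * (-1))
        (fun t ht => hderivTt t ht)
        (by simp [h0])
        (fun t ht => by
          have hm := hmemTt t ht
          have hb := (hbound (x (T - t)) hm).1
          have h2 : ‖x (T - t)‖ = x (T - t) := by
            rw [Real.norm_eq_abs, abs_of_nonneg hm.1]
          rw [h2, abs_mul, abs_neg, abs_one, mul_one]; exact hb)
      simp only [sub_self, Real.norm_eq_abs] at key
      have : |x 0| ≤ 0 := key
      have := abs_nonneg (x 0)
      nlinarith [abs_nonneg (x 0), le_abs_self (x 0)]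
    · -- x T = 1 : use z t = 1 - x (T - t)
      have key := hgron (fun t => 1 - x (T - t)) (fun t => -(F (x (T - t)) * (-1)))
        (fun t ht => (hderivTt t ht).const_sub 1)
        (by simp [h1])
        (fun t ht => by
          have hm := hmemTt t ht
          have hb := (hbound (x (T - t)) hm).2
          have h2 : ‖1 - x (T - t)‖ = 1 - x (T - t) := by
            rw [Real.norm_eq_abs, abs_of_nonneg (by linarith [hm.2])]
          rw [h2, abs_neg, abs_mul, abs_neg, abs_one, mul_one]; exact hb)
      simp only [sub_self, Real.norm_eq_abs] at key
      nlinarith [le_abs_self (1 - x 0), key]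
  -- positivity of F on (0,1)
  have hFpos : ∀ v ∈ Set.Ioo (0:ℝ) 1, 0 < F v := by
    intro v ⟨hv0, hv1⟩
    rw [hFfac]
    have h1 : (0:ℝ) < 1 - v := by linarith
    have h2 : (1 - v) ^ (N + 1) < 1 := pow_lt_one₀ h1.le (by linarith) (Nat.succ_ne_zero N)
    have h3 : 0 < v * c + β := by
      rw [hvc]
      nlinarith
    exact mul_pos (mul_pos h1 (by linarith)) h3
  -- continuity on Ici 0
  have hcontOn : ContinuousOn x (Set.Ici (0:ℝ)) := fun t ht =>
    (hcontAt t ht).continuousWithinAt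
  -- strict monotonicity
  have hsm : StrictMonoOn x (Set.Ici (0:ℝ)) := by
    apply strictMonoOn_of_deriv_pos (convex_Ici 0) hcontOn
    intro t ht
    rw [interior_Ici] at ht
    rw [(hode' t (le_of_lt ht)).deriv]
    exact hFpos (x t) (hInv t ht.le)
  refine ⟨hInv, hsm, ?_⟩
  -- convergence to 1
  set y : ℝ → ℝ := fun t => x (max t 0) with hy
  have hymono : Monotone y := by
    intro s t hst
    rcases eq_or_lt_of_le (max_le_max hst (le_refl (0:ℝ))) with h | h
    · show x (max s 0) ≤ x (max t 0); rw [h]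
    · exact (hsm (le_max_right s 0) (le_max_right t 0) h).le
  have hyIoo : ∀ t, y t ∈ Set.Ioo (0:ℝ) 1 := fun t => hInv _ (le_max_right t 0)
  have hbddy : BddAbove (Set.range y) := ⟨1, by rintro _ ⟨t, rfl⟩; exact (hyIoo t).2.le⟩
  set L : ℝ := ⨆ t, y t with hL
  have htendy : Tendsto y atTop (nhds L) := tendsto_atTop_ciSup hymono hbddy
  have hyleL : ∀ t, y t ≤ L := fun t => le_ciSup hbddy t
  have hx0L : x 0 ≤ L := by
    have h := hyleL 0
    have h2 : y 0 = x 0 := by show x (max 0 0) = x 0; norm_num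
    rwa [h2] at h
  have hL1 : L ≤ 1 := ciSup_le fun t => (hyIoo t).2.le
  have hxub : ∀ t : ℝ, 0 ≤ t → x t ≤ L := by
    intro t ht
    have h := hyleL t
    have h2 : y t = x t := by show x (max t 0) = x t; rw [max_eq_left ht]
    rwa [h2] at h
  have hxlb : ∀ t : ℝ, 0 ≤ t → x 0 ≤ x t := by
    intro t ht
    rcases ht.lt_or_eq with h | h
    · exact (hsm Set.self_mem_Ici ht h).le
    · rw [← h]
  -- show L = 1
  have hLeq : L = 1 := by
    by_contra hne
    have hLlt : L < 1 := lt_of_le_of_ne hL1 hne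
    set m : ℝ := (1 - L) * (1 - (1 - x 0) ^ (N + 1)) * (x 0 * (r - 1 - α)) with hm
    have hApow : (1 - x 0) ^ (N + 1) < 1 :=
      pow_lt_one₀ (by linarith) (by linarith) (Nat.succ_ne_zero N)
    have hmpos : 0 < m := by
      rw [hm]
      have h0 : 0 < r - 1 - α := by linarith
      have h1 : 0 < 1 - L := by linarith
      have h2 : 0 < 1 - (1 - x 0) ^ (N + 1) := by linarith
      exact mul_pos (mul_pos h1 h2) (mul_pos hx0pos h0)
    have hmle : ∀ t : ℝ, 0 ≤ t → m ≤ F (x t) := by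
      intro t ht
      have hvIoo := hInv t ht
      have hvlb : x 0 ≤ x t := hxlb t ht
      have hvub : x t ≤ L := hxub t ht
      have hu0 : (0:ℝ) < 1 - x t := by linarith [hvIoo.2]
      have hupow : (1 - x t) ^ (N + 1) ≤ (1 - x 0) ^ (N + 1) :=
        pow_le_pow_left₀ hu0.le (by linarith) _
      have hcb : x 0 * (r - 1 - α) ≤ x t * c + β := by
        rw [hvc]
        have h1 : x 0 * (r - 1 - α) ≤ x t * (r - 1 - α) :=
          mul_le_mul_of_nonneg_right hvlb (by linarith)
        have h2 : 0 ≤ (1 - x t) * β := mul_nonneg hu0.le hβ.le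
        linarith
      rw [hFfac, hm]
      exact prod3_le_aux (by linarith) (by linarith [hApow])
        (mul_nonneg hx0pos.le (by linarith)) (by linarith) (by linarith) hcb
    -- linear growth: x t ≥ x 0 + m t
    have hgrow : ∀ t : ℝ, 0 ≤ t → x 0 + m * t ≤ x t := by
      intro t ht
      set g : ℝ → ℝ := fun t => x t - m * t with hg
      have hgderiv : ∀ s : ℝ, 0 ≤ s → HasDerivAt g (F (x s) - m) s := by
        intro s hs
        exact (hode' s hs).sub (by simpa using (hasDerivAt_id s).const_mul m)
      have hgmono : MonotoneOn g (Set.Ici (0:ℝ)) := by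
        apply monotoneOn_of_deriv_nonneg (convex_Ici 0)
          (fun s hs => (hgderiv s hs).continuousAt.continuousWithinAt)
        · intro s hs
          rw [interior_Ici] at hs
          exact ((hgderiv s hs.le).differentiableAt).differentiableWithinAt
        · intro s hs
          rw [interior_Ici] at hs
          rw [(hgderiv s hs.le).deriv]
          linarith [hmle s hs.le]
      have := hgmono (Set.self_mem_Ici) (Set.mem_Ici.2 ht) ht
      simp only [hg] at this
      linarith
    have hbig := hgrow (2 / m) (div_pos two_pos hmpos).le
    have hlt1 := (hInv (2 / m) (div_pos two_pos hmpos).le).2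
    have : m * (2 / m) = 2 := by field_simp
    nlinarith
  rw [← hLeq]
  apply htendy.congr'
  filter_upwards [eventually_ge_atTop (0:ℝ)] with t ht
  show x (max t 0) = x t
  rw [max_eq_left ht]
end
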